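/- arXiv:2206.03696 — 2 statements merged into one kernel-verified Lean document; each statement's English description precedes it below -/
import Mathlib

section
/- Over the integers modulo a prime m, the formal power series congruence ∏_{n≥1}(1 - q^n)^m ≡ ∏_{n≥1}(1 - q^{mn}) (mod m) holds; consequently, with a = 5 - (m mod 6) and b = (m mod 6) - 1 for prime m ≥ 5, one has (∏(1-q^{5n})/∏(1-q^n)) · ∏(1-q^{5mn})^a ∏(1-q^{mn})^b ≡ ∏(1-q^{5n})^{am+1} ∏(1-q^n)^{bm-1} (mod m) as formal power series. -/
open PowerSeries in
/-- Over `ℤ/m` for a prime `m ≥ 5`: `∏ (1-qⁿ)^m ≡ ∏ (1-q^{mn})`, and with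
`m' = m % 6`, `a = 5 - m'`, `b = m' - 1`, the congruence
`(∏(1-q^{5n})/∏(1-qⁿ)) · ∏(1-q^{5mn})^a ∏(1-q^{mn})^b
  ≡ ∏(1-q^{5n})^{am+1} ∏(1-qⁿ)^{bm-1}` holds (stated with the denominator
`∏(1-qⁿ)` cleared, i.e. multiplied to both sides, and coefficientwise:
factors of index `> N` do not affect the coefficient of `q^N`). -/
theorem eta_quotient_congruence (m : ℕ) (hm : m.Prime) (hm5 : 5 ≤ m)
    (a b : ℕ) (ha : a = 5 - m % 6) (hb : b = m % 6 - 1) :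
    (∀ N : ℕ,
      (PowerSeries.coeff (R := ZMod m) N)
        (∏ n ∈ Finset.range (N + 1), (1 - (X : (ZMod m)⟦X⟧) ^ (n + 1)) ^ m) =
      (PowerSeries.coeff (R := ZMod m) N)
        (∏ n ∈ Finset.range (N + 1), (1 - (X : (ZMod m)⟦X⟧) ^ (m * (n + 1))))) ∧
    (∀ N : ℕ,
      (PowerSeries.coeff (R := ZMod m) N)
        ((∏ n ∈ Finset.range (N + 1), (1 - (X : (ZMod m)⟦X⟧) ^ (5 * (n + 1)))) *
         (∏ n ∈ Finset.range (N + 1), (1 - (X : (ZMod m)⟦X⟧) ^ (5 * m * (n + 1))) ^ a) *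
         (∏ n ∈ Finset.range (N + 1), (1 - (X : (ZMod m)⟦X⟧) ^ (m * (n + 1))) ^ b)) =
      (PowerSeries.coeff (R := ZMod m) N)
        ((∏ n ∈ Finset.range (N + 1), (1 - (X : (ZMod m)⟦X⟧) ^ (5 * (n + 1))) ^ (a * m + 1)) *
         (∏ n ∈ Finset.range (N + 1), (1 - (X : (ZMod m)⟦X⟧) ^ (n + 1)) ^ (b * m)))) := by
  haveI : Fact m.Prime := ⟨hm⟩
  haveI : CharP ((ZMod m)⟦X⟧) m :=
    charP_of_injective_ringHom (PowerSeries.C_injective (R := ZMod m)) m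
  have key : ∀ k : ℕ, (1 - (X : (ZMod m)⟦X⟧) ^ k) ^ m = 1 - X ^ (m * k) := by
    intro k
    rw [sub_pow_char, one_pow, ← pow_mul, mul_comm k m]
  constructor
  · intro N
    congr 1
    exact Finset.prod_congr rfl fun n _ => key (n + 1)
  · intro N
    congr 1
    have h5 : ∀ n : ℕ, (1 - (X : (ZMod m)⟦X⟧) ^ (5 * m * (n + 1))) ^ a
        = (1 - X ^ (5 * (n + 1))) ^ (a * m) := by
      intro n
      rw [show 5 * m * (n + 1) = m * (5 * (n + 1)) by ring, ← key, ← pow_mul, mul_comm m a]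
    have h1 : ∀ n : ℕ, (1 - (X : (ZMod m)⟦X⟧) ^ (m * (n + 1))) ^ b
        = (1 - X ^ (n + 1)) ^ (b * m) := by
      intro n
      rw [← key, ← pow_mul, mul_comm m b]
    rw [Finset.prod_congr rfl fun n _ => h5 n, Finset.prod_congr rfl fun n _ => h1 n,
      ← Finset.prod_mul_distrib]
    congr 1
    exact Finset.prod_congr rfl fun n _ => by rw [← pow_succ']
end

section
/- Let m ≥ 5 be a prime and l a prime such that b_5((mln - 1)/6) ≡ 0 (mod m) for all integers n coprime to l (where b_5 of a negative or non-integral argument is 0). Then the arithmetic progression {m l² t + c : t ≥ 0}, where c = (m l n₀ - 1)/6 for any fixed n₀ coprime to l with 6 | m l n₀ - 1, consists entirely of integers N with b_5(N) ≡ 0 (mod m); in particular there exist infinitely many N with b_5(N) ≡ 0 (mod m). -/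
open scoped Classical

/-- `b5 n` is the number of 5-regular partitions of `n`. -/
noncomputable def b5 (n : ℕ) : ℕ :=
  Fintype.card {p : Nat.Partition n // ∀ i ∈ p.parts, ¬ 5 ∣ i}

/-- `b5` extended to rational arguments, with value `0` at negative or
non-integral arguments. -/
noncomputable def b5Q (x : ℚ) : ℤ :=
  if x.den = 1 ∧ 0 ≤ x then (b5 x.num.toNat : ℤ) else 0

lemma b5Q_intCast (k : ℤ) (hk : 0 ≤ k) : b5Q (k : ℚ) = (b5 k.toNat : ℤ) := by
  simp [b5Q, hk, Int.cast_nonneg_iff.2 hk]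

/-- If `b5((mln-1)/6) ≡ 0 (mod m)` for all `n` coprime to the prime `l`, then
for any fixed `n₀` coprime to `l` with `6 ∣ m l n₀ - 1`, the whole arithmetic
progression `m l² t + c`, `c = (m l n₀ - 1)/6`, consists of indices `N` with
`b5(N) ≡ 0 (mod m)`; in particular infinitely many such `N` exist. -/
theorem ramanujan_progression (m l : ℕ) (hm : m.Prime) (hm5 : 5 ≤ m)
    (hl : l.Prime) (hlcop : Nat.Coprime l (6 * m))
    (hcong : ∀ n : ℤ, ¬ (l : ℤ) ∣ n →
      (m : ℤ) ∣ b5Q (((m : ℚ) * l * n - 1) / 6))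
    (n₀ : ℤ) (hn₀ : ¬ (l : ℤ) ∣ n₀) (hdvd : (6 : ℤ) ∣ (m : ℤ) * l * n₀ - 1)
    (c : ℤ) (hc : c = ((m : ℤ) * l * n₀ - 1) / 6) :
    (∀ t : ℕ, (m : ℤ) ∣ b5Q (((m : ℤ) * l ^ 2 * t + c : ℤ) : ℚ)) ∧
    (∀ B : ℕ, ∃ N : ℕ, B ≤ N ∧ (m : ℤ) ∣ (b5 N : ℤ)) := by
  obtain ⟨k, hk⟩ := hdvd
  have hck : c = k := by rw [hc, hk]; omega
  have key : ∀ t : ℕ, (m : ℤ) ∣ b5Q (((m : ℤ) * l ^ 2 * t + c : ℤ) : ℚ) := by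
    intro t
    have hn : ¬ (l : ℤ) ∣ (n₀ + 6 * l * t) := by
      intro h
      have h6 : (l : ℤ) ∣ 6 * l * t := ⟨6 * t, by ring⟩
      exact hn₀ (by simpa using h.sub h6)
    have h2 := hcong (n₀ + 6 * l * t) hn
    have heq : (((m : ℤ) * l ^ 2 * t + c : ℤ) : ℚ)
        = ((m : ℚ) * l * ((n₀ + 6 * l * t : ℤ) : ℚ) - 1) / 6 := by
      have hkQ : (m : ℚ) * l * (n₀ : ℚ) - 1 = 6 * (k : ℚ) := by
        exact_mod_cast congrArg (Int.cast : ℤ → ℚ) hk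
      rw [hck, eq_div_iff (by norm_num : (6 : ℚ) ≠ 0)]
      push_cast
      linear_combination -hkQ
    rw [heq]
    exact h2
  refine ⟨key, fun B => ?_⟩
  have hml : (1 : ℤ) ≤ (m : ℤ) * l ^ 2 := by
    have h1 : 1 ≤ m := hm.one_lt.le
    have h2 : 1 ≤ l := hl.one_lt.le
    have : (1 : ℤ) ≤ m := by exact_mod_cast h1
    have : (1 : ℤ) ≤ l := by exact_mod_cast h2
    nlinarith
  set t : ℕ := B + c.natAbs with ht
  have hX : (B : ℤ) ≤ (m : ℤ) * l ^ 2 * t + c := by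
    have h1 : (t : ℤ) ≤ (m : ℤ) * l ^ 2 * t := by
      nlinarith [Int.natCast_nonneg t]
    have h2 : (t : ℤ) = B + c.natAbs := by push_cast [ht]; ring
    have h3 : -c ≤ (c.natAbs : ℤ) := by omega
    linarith
  refine ⟨((m : ℤ) * l ^ 2 * t + c).toNat, ?_, ?_⟩
  · omega
  · have := key t
    rwa [b5Q_intCast _ (by omega)] at this
end
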